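/- arXiv:2101.10999 — 4 statements merged into one kernel-verified Lean document; each statement's English description precedes it below -/
import Mathlib

section
/- For each integer N ≥ 2 there exist ε₀ > 0, ΔΩ > 0 and C > 0, and a C^∞ map (ε,ω) ↦ p*(ε,ω) ∈ ℝ^N defined for |ε| < ε₀ and |ω − 1| < ΔΩ, such that for β = γ = 0 the point (p*(ε,ω), 0) is a stationary solution, i.e. G(p*(ε,ω), 0; ε, ω, 0, 0) = 0, with p*(0,1) = (1,0,…,0), and such that |p*₁(ε,ω) − 1| ≤ C(|ε| + |ω − 1|) and |p*ⱼ(ε,ω)| ≤ C|ε|^{j−1} for j = 2,…,N. -/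
/-- The discrete Laplacian on `Fin N → ℝ` with the boundary conventions
`(Δx)_1 = x_2 − x_1`, `(Δx)_N = x_{N−1} − x_N`. -/
def lap {N : ℕ} (x : Fin N → ℝ) (j : Fin N) : ℝ :=
  (if h : j.val + 1 < N then x ⟨j.val + 1, h⟩ else x j)
  + (if 0 < j.val then x ⟨j.val - 1, lt_of_le_of_lt (Nat.sub_le _ _) j.isLt⟩ else x j)
  - 2 * x j

/-- The damped and driven dNLS vector field in the rotating frame, in real
coordinates `(p, q)`, with parameters `ε, ω, γ, β`. -/
def G (N : ℕ) (ε ω γ β : ℝ) (u : (Fin N → ℝ) × (Fin N → ℝ)) :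
    (Fin N → ℝ) × (Fin N → ℝ) :=
  (fun j => ε * lap u.2 j + ω * u.2 j - (u.1 j ^ 2 + u.2 j ^ 2) * u.2 j
      + (if j.val = 0 then β * u.1 j else 0)
      - (if j.val = N - 1 then γ * u.1 j else 0),
   fun j => -(ε * lap u.1 j) - ω * u.1 j + (u.1 j ^ 2 + u.2 j ^ 2) * u.1 j
      + (if j.val = 0 then β * u.2 j else 0)
      - (if j.val = N - 1 then γ * u.2 j else 0))

noncomputable section BreatherAux

/-- The discrete Laplacian as a continuous linear map. -/
def lapL (N : ℕ) : (Fin N → ℝ) →L[ℝ] (Fin N → ℝ) :=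
  ContinuousLinearMap.pi fun j =>
    (if h : (j : ℕ) + 1 < N then (ContinuousLinearMap.proj (⟨(j : ℕ) + 1, h⟩ : Fin N) : (Fin N → ℝ) →L[ℝ] ℝ)
      else ContinuousLinearMap.proj j)
    + (if 0 < (j : ℕ) then
        (ContinuousLinearMap.proj
          (⟨(j : ℕ) - 1, lt_of_le_of_lt (Nat.sub_le _ _) j.isLt⟩ : Fin N) : (Fin N → ℝ) →L[ℝ] ℝ)
      else ContinuousLinearMap.proj j)
    - (2 : ℝ) • ContinuousLinearMap.proj j

def e1v (N : ℕ) : Fin N → ℝ := fun j => if (j : ℕ) = 0 then 1 else 0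

def dv (N : ℕ) : Fin N → ℝ := fun j => if (j : ℕ) = 0 then 2 else -1

/-- The map whose zero set (in the second component) gives breathers. -/
def FF (N : ℕ) : (ℝ × ℝ) × (Fin N → ℝ) → (ℝ × ℝ) × (Fin N → ℝ) :=
  fun u => (u.1, fun j => u.2 j * u.2 j * u.2 j - u.1.2 * u.2 j - u.1.1 * lapL N u.2 j)


theorem lapL_apply {N : ℕ} (x : Fin N → ℝ) (j : Fin N) : lapL N x j = lap x j := by
  simp only [lapL, lap, ContinuousLinearMap.pi_apply]
  split_ifs <;>
    simp [ContinuousLinearMap.sub_apply, ContinuousLinearMap.add_apply,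
      ContinuousLinearMap.smul_apply, ContinuousLinearMap.proj_apply]

theorem dv_ne {N : ℕ} (j : Fin N) : dv N j ≠ 0 := by
  unfold dv; split <;> norm_num

/-- The derivative of `FF` at the base point, as a linear map. -/
def Lf (N : ℕ) : ((ℝ × ℝ) × (Fin N → ℝ)) →ₗ[ℝ] ((ℝ × ℝ) × (Fin N → ℝ)) where
  toFun u := (u.1, fun j => dv N j * u.2 j - u.1.2 * e1v N j - u.1.1 * lapL N (e1v N) j)
  map_add' a b := by
    refine Prod.ext rfl (funext fun j => ?_)
    simp only [Prod.snd_add, Prod.fst_add, Pi.add_apply]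
    ring
  map_smul' c a := by
    refine Prod.ext rfl (funext fun j => ?_)
    simp only [Prod.smul_snd, Prod.smul_fst, Pi.smul_apply, smul_eq_mul, RingHom.id_apply]
    ring

def Lg (N : ℕ) : ((ℝ × ℝ) × (Fin N → ℝ)) →ₗ[ℝ] ((ℝ × ℝ) × (Fin N → ℝ)) where
  toFun u := (u.1, fun j => (u.2 j + u.1.2 * e1v N j + u.1.1 * lapL N (e1v N) j) / dv N j)
  map_add' a b := by
    refine Prod.ext rfl (funext fun j => ?_)
    simp only [Prod.snd_add, Prod.fst_add, Pi.add_apply]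
    ring
  map_smul' c a := by
    refine Prod.ext rfl (funext fun j => ?_)
    simp only [Prod.smul_snd, Prod.smul_fst, Pi.smul_apply, smul_eq_mul, RingHom.id_apply]
    ring

def Leq (N : ℕ) : ((ℝ × ℝ) × (Fin N → ℝ)) ≃ₗ[ℝ] ((ℝ × ℝ) × (Fin N → ℝ)) :=
  LinearEquiv.ofLinear (Lf N) (Lg N)
    (by
      refine LinearMap.ext fun u => Prod.ext rfl (funext fun j => ?_)
      simp only [LinearMap.comp_apply, Lf, Lg, LinearMap.coe_mk, AddHom.coe_mk,
        LinearMap.id_apply]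
      field_simp [dv_ne]
      ring)
    (by
      refine LinearMap.ext fun u => Prod.ext rfl (funext fun j => ?_)
      simp only [LinearMap.comp_apply, Lf, Lg, LinearMap.coe_mk, AddHom.coe_mk,
        LinearMap.id_apply]
      field_simp [dv_ne]
      ring)

/-- The derivative of `FF` at the base point, as a continuous linear equivalence. -/
def CLE (N : ℕ) : ((ℝ × ℝ) × (Fin N → ℝ)) ≃L[ℝ] ((ℝ × ℝ) × (Fin N → ℝ)) :=
  (Leq N).toContinuousLinearEquiv


section Deriv
variable (N : ℕ)

theorem contDiff_FF : ContDiff ℝ (⊤ : WithTop ℕ∞) (FF N) := by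
  apply ContDiff.prodMk contDiff_fst
  apply contDiff_pi.2
  intro j
  have hp : ContDiff ℝ (⊤ : WithTop ℕ∞) fun u : (ℝ × ℝ) × (Fin N → ℝ) => u.2 j :=
    ((ContinuousLinearMap.proj j).comp (ContinuousLinearMap.snd ℝ (ℝ × ℝ) (Fin N → ℝ))).contDiff
  have hε : ContDiff ℝ (⊤ : WithTop ℕ∞) fun u : (ℝ × ℝ) × (Fin N → ℝ) => u.1.1 :=
    ((ContinuousLinearMap.fst ℝ ℝ ℝ).comp (ContinuousLinearMap.fst ℝ (ℝ × ℝ) (Fin N → ℝ))).contDiff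
  have hω : ContDiff ℝ (⊤ : WithTop ℕ∞) fun u : (ℝ × ℝ) × (Fin N → ℝ) => u.1.2 :=
    ((ContinuousLinearMap.snd ℝ ℝ ℝ).comp (ContinuousLinearMap.fst ℝ (ℝ × ℝ) (Fin N → ℝ))).contDiff
  have hq : ContDiff ℝ (⊤ : WithTop ℕ∞) fun u : (ℝ × ℝ) × (Fin N → ℝ) => lapL N u.2 j :=
    ((ContinuousLinearMap.proj j).comp
      ((lapL N).comp (ContinuousLinearMap.snd ℝ (ℝ × ℝ) (Fin N → ℝ)))).contDiff
  exact (((hp.mul hp).mul hp).sub (hω.mul hp)).sub (hε.mul hq)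

def x₀ : (ℝ × ℝ) × (Fin N → ℝ) := ((0, 1), e1v N)

theorem FF_x₀ : FF N (x₀ N) = ((0, 1), 0) := by
  refine Prod.ext rfl (funext fun j => ?_)
  simp only [FF, x₀]
  by_cases hj : (j : ℕ) = 0 <;> simp [e1v, hj]

theorem hasFDerivAt_FF :
    HasFDerivAt (FF N) ((CLE N : ((ℝ × ℝ) × (Fin N → ℝ)) →L[ℝ] _)) (x₀ N) := by
  set P : Fin N → ((ℝ × ℝ) × (Fin N → ℝ)) →L[ℝ] ℝ := fun j =>
    (ContinuousLinearMap.proj j).comp (ContinuousLinearMap.snd ℝ (ℝ × ℝ) (Fin N → ℝ)) with hP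
  set Wε : ((ℝ × ℝ) × (Fin N → ℝ)) →L[ℝ] ℝ :=
    (ContinuousLinearMap.fst ℝ ℝ ℝ).comp (ContinuousLinearMap.fst ℝ (ℝ × ℝ) (Fin N → ℝ)) with hWε
  set Wω : ((ℝ × ℝ) × (Fin N → ℝ)) →L[ℝ] ℝ :=
    (ContinuousLinearMap.snd ℝ ℝ ℝ).comp (ContinuousLinearMap.fst ℝ (ℝ × ℝ) (Fin N → ℝ)) with hWω
  set Q : Fin N → ((ℝ × ℝ) × (Fin N → ℝ)) →L[ℝ] ℝ := fun j =>
    (ContinuousLinearMap.proj j).comp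
      ((lapL N).comp (ContinuousLinearMap.snd ℝ (ℝ × ℝ) (Fin N → ℝ))) with hQ
  have hp : ∀ j : Fin N, HasFDerivAt (fun u : (ℝ × ℝ) × (Fin N → ℝ) => u.2 j) (P j) (x₀ N) :=
    fun j => (P j).hasFDerivAt
  have hε : HasFDerivAt (fun u : (ℝ × ℝ) × (Fin N → ℝ) => u.1.1) Wε (x₀ N) := Wε.hasFDerivAt
  have hω : HasFDerivAt (fun u : (ℝ × ℝ) × (Fin N → ℝ) => u.1.2) Wω (x₀ N) := Wω.hasFDerivAt
  have hq : ∀ j : Fin N,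
      HasFDerivAt (fun u : (ℝ × ℝ) × (Fin N → ℝ) => lapL N u.2 j) (Q j) (x₀ N) :=
    fun j => (Q j).hasFDerivAt
  have hcomp : ∀ j : Fin N,
      HasFDerivAt (fun u : (ℝ × ℝ) × (Fin N → ℝ) =>
          u.2 j * u.2 j * u.2 j - u.1.2 * u.2 j - u.1.1 * lapL N u.2 j)
        ((((x₀ N).2 j * (x₀ N).2 j) • P j +
            (x₀ N).2 j • ((x₀ N).2 j • P j + (x₀ N).2 j • P j)) -
          ((x₀ N).1.2 • P j + (x₀ N).2 j • Wω) -
          ((x₀ N).1.1 • Q j + (lapL N (x₀ N).2 j) • Wε)) (x₀ N) :=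
    fun j => ((((hp j).mul (hp j)).mul (hp j)).sub (hω.mul (hp j))).sub (hε.mul (hq j))
  have hFull : HasFDerivAt (FF N)
      ((ContinuousLinearMap.fst ℝ (ℝ × ℝ) (Fin N → ℝ)).prod
        (ContinuousLinearMap.pi fun j =>
          (((x₀ N).2 j * (x₀ N).2 j) • P j +
            (x₀ N).2 j • ((x₀ N).2 j • P j + (x₀ N).2 j • P j)) -
          ((x₀ N).1.2 • P j + (x₀ N).2 j • Wω) -
          ((x₀ N).1.1 • Q j + (lapL N (x₀ N).2 j) • Wε))) (x₀ N) :=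
    hasFDerivAt_fst.prodMk (hasFDerivAt_pi.2 hcomp)
  have heq : (CLE N : ((ℝ × ℝ) × (Fin N → ℝ)) →L[ℝ] ((ℝ × ℝ) × (Fin N → ℝ))) =
      (ContinuousLinearMap.fst ℝ (ℝ × ℝ) (Fin N → ℝ)).prod
        (ContinuousLinearMap.pi fun j =>
          (((x₀ N).2 j * (x₀ N).2 j) • P j +
            (x₀ N).2 j • ((x₀ N).2 j • P j + (x₀ N).2 j • P j)) -
          ((x₀ N).1.2 • P j + (x₀ N).2 j • Wω) -
          ((x₀ N).1.1 • Q j + (lapL N (x₀ N).2 j) • Wε)) := by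
    refine ContinuousLinearMap.ext fun u => Prod.ext ?_ (funext fun j => ?_)
    · simp [CLE, Leq, Lf, x₀]
    · have hLHS : ((CLE N : ((ℝ × ℝ) × (Fin N → ℝ)) →L[ℝ] _) u) = (Lf N) u := rfl
      rw [hLHS]
      simp only [Lf, x₀, LinearMap.coe_mk, AddHom.coe_mk, ContinuousLinearMap.prod_apply,
        ContinuousLinearMap.pi_apply, ContinuousLinearMap.sub_apply,
        ContinuousLinearMap.add_apply, ContinuousLinearMap.smul_apply,
        ContinuousLinearMap.coe_comp', Function.comp_apply,
        ContinuousLinearMap.proj_apply, ContinuousLinearMap.coe_fst',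
        ContinuousLinearMap.coe_snd', smul_eq_mul]
      by_cases hj : (j : ℕ) = 0 <;> simp [e1v, dv, hj, hP, hWε, hWω, hQ] <;> ring
  rw [heq]; exact hFull

end Deriv

section Inverse
variable (N : ℕ)

/-- The partial homeomorphism given by the inverse function theorem. -/
def Psi : OpenPartialHomeomorph ((ℝ × ℝ) × (Fin N → ℝ)) ((ℝ × ℝ) × (Fin N → ℝ)) :=
  ((contDiff_FF N).contDiffAt).toOpenPartialHomeomorph (FF N) (hasFDerivAt_FF N) (by simp)

theorem Psi_coe : ((Psi N) : _ → _) = FF N := rfl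

theorem x₀_mem_source : x₀ N ∈ (Psi N).source :=
  ContDiffAt.mem_toOpenPartialHomeomorph_source _ _ _

theorem y₀_mem_target : ((0, 1), 0) ∈ (Psi N).target := by
  have := ContDiffAt.image_mem_toOpenPartialHomeomorph_target ((contDiff_FF N).contDiffAt)
    (hasFDerivAt_FF N) (by simp : (⊤ : WithTop ℕ∞) ≠ 0)
  rwa [FF_x₀] at this

theorem Psi_symm_y₀ : (Psi N).symm ((0, 1), 0) = x₀ N := by
  have h := (Psi N).left_inv (x₀_mem_source N)
  rw [Psi_coe, FF_x₀] at h
  exact h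

/-- An open set around `((0,1),0)` on which the local inverse is smooth and a right
inverse of `FF`. -/
theorem exists_good_set : ∃ U : Set ((ℝ × ℝ) × (Fin N → ℝ)), IsOpen U ∧
    (((0 : ℝ), (1 : ℝ)), (0 : Fin N → ℝ)) ∈ U ∧
    (∀ y ∈ U, ContDiffAt ℝ (⊤ : WithTop ℕ∞) (Psi N).symm y) ∧
    (∀ y ∈ U, FF N ((Psi N).symm y) = y) := by
  set V : Set ((ℝ × ℝ) × (Fin N → ℝ)) :=
    (fderiv ℝ (FF N)) ⁻¹' (Set.range (ContinuousLinearEquiv.toContinuousLinearMap :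
      (((ℝ × ℝ) × (Fin N → ℝ)) ≃L[ℝ] ((ℝ × ℝ) × (Fin N → ℝ))) → _)) with hV
  have hVopen : IsOpen V :=
    ContinuousLinearEquiv.isOpen.preimage ((contDiff_FF N).continuous_fderiv (by simp))
  refine ⟨(Psi N).symm.source ∩ (Psi N).symm ⁻¹' V,
    (Psi N).symm.isOpen_inter_preimage hVopen, ⟨?_, ?_⟩, ?_, ?_⟩
  · exact y₀_mem_target N
  · show (Psi N).symm ((0,1), 0) ∈ V
    rw [Psi_symm_y₀]
    exact ⟨CLE N, ((hasFDerivAt_FF N).fderiv).symm⟩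
  · rintro y ⟨hy1, hy2⟩
    obtain ⟨e', he'⟩ := hy2
    have hd : HasFDerivAt (FF N) (e' : _ →L[ℝ] _) ((Psi N).symm y) := by
      have hdiff : DifferentiableAt ℝ (FF N) ((Psi N).symm y) :=
        ((contDiff_FF N).differentiable (by simp)) _
      have := hdiff.hasFDerivAt
      rwa [← he'] at this
    exact (Psi N).contDiffAt_symm hy1 hd ((contDiff_FF N).contDiffAt)
  · rintro y ⟨hy1, _⟩
    have := (Psi N).right_inv hy1
    rwa [Psi_coe] at this

end Inverse

section Decay

theorem decay_estimate {N : ℕ} (hN : 2 ≤ N) (p : Fin N → ℝ) (ε ω : ℝ)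
    (heq : ∀ j : Fin N, p j * p j * p j - ω * p j - ε * lap p j = 0)
    (hω : 1/2 ≤ ω) (hs : |ε| ≤ 1/32)
    (h0 : ∀ j : Fin N, |p j| ≤ 2)
    (hsm : ∀ j : Fin N, 1 ≤ j.val → |p j| ≤ 1/2) :
    ∀ j : Fin N, 1 ≤ j.val → |p j| ≤ 2 * (16 * |ε|) ^ j.val := by
  haveI : NeZero N := ⟨by omega⟩
  set s := |ε| with hsdef
  have hs0 : 0 ≤ s := abs_nonneg _
  -- pointwise recursive bound
  have step2 : ∀ k : Fin N, 1 ≤ k.val →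
      |p k| ≤ 8 * s * ((if h : k.val + 1 < N then |p ⟨k.val + 1, h⟩| else |p k|) +
        |p ⟨k.val - 1, lt_of_le_of_lt (Nat.sub_le _ _) k.isLt⟩|) := by
    intro k hk
    have hek := heq k
    have hlap : |lap p k| ≤ (if h : k.val + 1 < N then |p ⟨k.val + 1, h⟩| else |p k|) +
        |p ⟨k.val - 1, lt_of_le_of_lt (Nat.sub_le _ _) k.isLt⟩| + 2 * |p k| := by
      unfold lap
      rw [if_pos (by omega : 0 < k.val)]
      split_ifs with h
      · calc |p ⟨k.val + 1, h⟩ + p ⟨k.val - 1, _⟩ - 2 * p k|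
            ≤ |p ⟨k.val + 1, h⟩ + p ⟨k.val - 1, _⟩| + |2 * p k| := abs_sub _ _
          _ ≤ |p ⟨k.val + 1, h⟩| + |p ⟨k.val - 1, _⟩| + 2 * |p k| := by
              have := abs_add_le (p ⟨k.val + 1, h⟩) (p ⟨k.val - 1,
                lt_of_le_of_lt (Nat.sub_le _ _) k.isLt⟩)
              rw [abs_mul]
              simp only [abs_two]
              linarith
      · calc |p k + p ⟨k.val - 1, _⟩ - 2 * p k|
            ≤ |p k + p ⟨k.val - 1, _⟩| + |2 * p k| := abs_sub _ _
          _ ≤ |p k| + |p ⟨k.val - 1, _⟩| + 2 * |p k| := by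
              have := abs_add_le (p k) (p ⟨k.val - 1,
                lt_of_le_of_lt (Nat.sub_le _ _) k.isLt⟩)
              rw [abs_mul]
              simp only [abs_two]
              linarith
    -- |p k| * |p k ^2 - ω| = s * |lap p k|
    have hfac : p k * (p k * p k - ω) = ε * lap p k := by linarith [hek]
    have habs : |p k| * |p k * p k - ω| = s * |lap p k| := by
      rw [← abs_mul, hfac, abs_mul]
    have hlow : 1/4 ≤ |p k * p k - ω| := by
      have h1 : |p k| ≤ 1/2 := hsm k hk
      have h2 : p k * p k ≤ 1/4 := by nlinarith [abs_nonneg (p k), neg_abs_le (p k), le_abs_self (p k)]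
      have : p k * p k - ω ≤ -(1/4) := by linarith
      calc (1/4 : ℝ) ≤ -(p k * p k - ω) := by linarith
        _ ≤ |p k * p k - ω| := neg_le_abs _
    set t1 := (if h : k.val + 1 < N then |p ⟨k.val + 1, h⟩| else |p k|) with ht1
    set t2 := |p ⟨k.val - 1, lt_of_le_of_lt (Nat.sub_le _ _) k.isLt⟩| with ht2
    have ht1n : 0 ≤ t1 := by rw [ht1]; split_ifs <;> exact abs_nonneg _
    have ht2n : 0 ≤ t2 := abs_nonneg _
    have hpk : 0 ≤ |p k| := abs_nonneg _
    have hlapn : 0 ≤ |lap p k| := abs_nonneg _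
    -- |p k| / 4 ≤ s * (t1 + t2 + 2 |p k|)
    have hmain : |p k| * (1/4) ≤ s * (t1 + t2 + 2 * |p k|) := by
      calc |p k| * (1/4) ≤ |p k| * |p k * p k - ω| := by nlinarith
        _ = s * |lap p k| := habs
        _ ≤ s * (t1 + t2 + 2 * |p k|) := by
            apply mul_le_mul_of_nonneg_left _ hs0
            exact hlap
    nlinarith [hmain]
  -- the sup over tails
  set Sm : ℕ → ℝ := fun m =>
    Finset.univ.sup' Finset.univ_nonempty (fun k : Fin N => if m ≤ k.val then |p k| else 0)
    with hSm
  have hS_nonneg : ∀ m, 0 ≤ Sm m := by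
    intro m
    have h1 : (0:ℝ) ≤ (fun k : Fin N => if m ≤ k.val then |p k| else 0) default := by
      simp only; split_ifs
      · exact abs_nonneg _
      · exact le_refl 0
    exact le_trans h1 (Finset.le_sup' (fun k : Fin N => if m ≤ k.val then |p k| else 0) (Finset.mem_univ default))
  have hmem : ∀ (m : ℕ) (k : Fin N), m ≤ k.val → |p k| ≤ Sm m := by
    intro m k hk
    have := Finset.le_sup' (fun k : Fin N => if m ≤ k.val then |p k| else 0)
      (Finset.mem_univ k)
    rwa [if_pos hk] at this
  have hSbound : ∀ m : ℕ, Sm m ≤ 2 * (16 * s) ^ m := by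
    intro m
    induction m with
    | zero =>
      simp only [pow_zero, mul_one]
      apply Finset.sup'_le
      intro k _
      split_ifs
      · exact h0 k
      · norm_num
    | succ m IH =>
      have key : Sm (m + 1) ≤ 8 * s * (Sm m + Sm (m + 1)) := by
        apply Finset.sup'_le
        intro k _
        split_ifs with hk
        · have hk1 : 1 ≤ k.val := by omega
          have h2 := step2 k hk1
          have ht1 : (if h : k.val + 1 < N then |p ⟨k.val + 1, h⟩| else |p k|) ≤ Sm (m + 1) := by
            split_ifs with h
            · exact hmem (m+1) ⟨k.val + 1, h⟩ (by simp; omega)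
            · exact hmem (m+1) k hk
          have ht2 : |p ⟨k.val - 1, lt_of_le_of_lt (Nat.sub_le _ _) k.isLt⟩| ≤ Sm m :=
            hmem m _ (by simp; omega)
          calc |p k| ≤ 8 * s * ((if h : k.val + 1 < N then |p ⟨k.val + 1, h⟩| else |p k|) +
              |p ⟨k.val - 1, lt_of_le_of_lt (Nat.sub_le _ _) k.isLt⟩|) := h2
            _ ≤ 8 * s * (Sm (m+1) + Sm m) := by
                apply mul_le_mul_of_nonneg_left _ (by positivity)
                linarith
            _ = 8 * s * (Sm m + Sm (m+1)) := by ring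
        · exact mul_nonneg (by positivity) (by linarith [hS_nonneg m, hS_nonneg (m+1)])
      have h1 : Sm (m + 1) ≤ 16 * s * Sm m := by
        nlinarith [hS_nonneg m, hS_nonneg (m+1), key]
      calc Sm (m + 1) ≤ 16 * s * Sm m := h1
        _ ≤ 16 * s * (2 * (16 * s) ^ m) := by
            apply mul_le_mul_of_nonneg_left IH (by positivity)
        _ = 2 * (16 * s) ^ (m + 1) := by ring
  intro j hj
  exact le_trans (hmem j.val j le_rfl) (hSbound j.val)

end Decay

end BreatherAux


/-- Existence of the family of undamped breathers `p*(ε, ω)` (Theorem 1.1). -/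
theorem stmt_0 (N : ℕ) (hN : 2 ≤ N) :
    ∃ ε₀ > (0 : ℝ), ∃ ΔΩ > (0 : ℝ), ∃ C > (0 : ℝ),
    ∃ ps : ℝ × ℝ → Fin N → ℝ,
      ContDiffOn ℝ (⊤ : ℕ∞) ps {x : ℝ × ℝ | |x.1| < ε₀ ∧ |x.2 - 1| < ΔΩ} ∧
      ps (0, 1) = (fun j => if j.val = 0 then 1 else 0) ∧
      ∀ x : ℝ × ℝ, |x.1| < ε₀ → |x.2 - 1| < ΔΩ →
        G N x.1 x.2 0 0 (ps x, 0) = 0 ∧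
        |ps x ⟨0, by omega⟩ - 1| ≤ C * (|x.1| + |x.2 - 1|) ∧
        ∀ j : Fin N, 1 ≤ j.val → |ps x j| ≤ C * |x.1| ^ j.val := by
  obtain ⟨U, hUopen, hy₀U, hsmooth, hrinv⟩ := exists_good_set N
  obtain ⟨K, t, ht, hLip⟩ := ((hsmooth _ hy₀U).of_le le_top).exists_lipschitzOnWith
  obtain ⟨r1, hr1, hball1⟩ := Metric.isOpen_iff.1 hUopen _ hy₀U
  obtain ⟨r2, hr2, hball2⟩ := Metric.nhds_basis_ball.mem_iff.1 ht
  set Kr := (K : ℝ) with hKrdef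
  have hKr : 0 ≤ Kr := K.coe_nonneg
  set ρ : ℝ := min (min (r1/2) (r2/2)) (min (1/32) (1/(4*(Kr+1)))) with hρdef
  have hρpos : 0 < ρ := by positivity
  have hρ32 : ρ ≤ 1/32 := le_trans (min_le_right _ _) (min_le_left _ _)
  have hρK : ρ ≤ 1/(4*(Kr+1)) := le_trans (min_le_right _ _) (min_le_right _ _)
  have hρr1 : ρ ≤ r1/2 := le_trans (min_le_left _ _) (min_le_left _ _)
  have hρr2 : ρ ≤ r2/2 := le_trans (min_le_left _ _) (min_le_right _ _)
  set C : ℝ := Kr + 2*16^N + 1 with hCdef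
  have hCpos : 0 < C := by positivity
  set y₀ : (ℝ × ℝ) × (Fin N → ℝ) := (((0:ℝ),(1:ℝ)), (0 : Fin N → ℝ)) with hy₀def
  -- distance computation
  have hdist : ∀ x : ℝ × ℝ, dist ((x, (0 : Fin N → ℝ))) y₀ = max |x.1| |x.2 - 1| := by
    intro x
    rw [hy₀def, Prod.dist_eq, dist_self, Prod.dist_eq, Real.dist_eq, Real.dist_eq]
    rw [max_eq_left (le_max_of_le_left (abs_nonneg _))]
    simp
  have hmem : ∀ x : ℝ × ℝ, |x.1| < ρ → |x.2 - 1| < ρ →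
      ((x, (0 : Fin N → ℝ)) ∈ U ∧ (x, (0 : Fin N → ℝ)) ∈ t) := by
    intro x h1 h2
    have hdx : dist ((x, (0 : Fin N → ℝ))) y₀ < ρ := by
      rw [hdist]; exact max_lt h1 h2
    constructor
    · exact hball1 (by rw [Metric.mem_ball]; exact lt_of_lt_of_le hdx (by linarith))
    · exact hball2 (by rw [Metric.mem_ball]; exact lt_of_lt_of_le hdx (by linarith))
  have hy₀t : y₀ ∈ t := hball2 (by rw [Metric.mem_ball, dist_self]; linarith)
  refine ⟨ρ, hρpos, ρ, hρpos, C, hCpos, fun x => ((Psi N).symm ((x, 0))).2, ?_, ?_, ?_⟩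
  · -- smoothness
    intro x hx
    obtain ⟨h1, h2⟩ := hx
    have hc := hsmooth (x, 0) (hmem x h1 h2).1
    have hmk : ContDiffAt ℝ (⊤ : WithTop ℕ∞) (fun y : ℝ × ℝ => ((y, (0 : Fin N → ℝ)))) x :=
      (contDiff_id.prodMk contDiff_const).contDiffAt
    exact (((contDiff_snd.contDiffAt.comp _ (hc.comp x hmk))).contDiffWithinAt).of_le le_top
  · -- value at the base point
    show ((Psi N).symm (((0:ℝ),(1:ℝ)), (0 : Fin N → ℝ))).2 = _
    rw [Psi_symm_y₀]
    rfl
  · intro x h1 h2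
    set w := (Psi N).symm ((x, 0)) with hwdef
    have hFFw : FF N w = (x, 0) := hrinv _ (hmem x h1 h2).1
    have hw1 : w.1 = x := by
      have : (FF N w).1 = w.1 := rfl
      rw [hFFw] at this
      exact this.symm
    have heqs : ∀ j : Fin N, w.2 j * w.2 j * w.2 j - x.2 * w.2 j - x.1 * lap w.2 j = 0 := by
      intro j
      have h2' := congrFun (congrArg Prod.snd hFFw) j
      simp only [FF] at h2'
      rw [hw1, lapL_apply] at h2'
      exact h2'
    -- Lipschitz bound
    have hKd : ∀ j : Fin N, |w.2 j - e1v N j| ≤ Kr * (|x.1| + |x.2 - 1|) := by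
      intro j
      have hd1 : dist (w.2 j) ((x₀ N).2 j) ≤ dist w (x₀ N) :=
        le_trans (dist_le_pi_dist w.2 (x₀ N).2 j) (by rw [Prod.dist_eq]; exact le_max_right _ _)
      have hd2 : dist w (x₀ N) ≤ Kr * dist ((x, (0 : Fin N → ℝ))) y₀ := by
        rw [← Psi_symm_y₀ N]
        exact hLip.dist_le_mul _ (hmem x h1 h2).2 _ hy₀t
      have hd3 : dist ((x, (0 : Fin N → ℝ))) y₀ ≤ |x.1| + |x.2 - 1| := by
        rw [hdist]
        exact max_le (le_add_of_nonneg_right (abs_nonneg _)) (le_add_of_nonneg_left (abs_nonneg _))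
      have := le_trans hd1 (le_trans hd2 (mul_le_mul_of_nonneg_left hd3 hKr))
      rwa [Real.dist_eq] at this
    have hsum_small : Kr * (|x.1| + |x.2 - 1|) ≤ 1/2 := by
      have hx2 : |x.1| + |x.2 - 1| ≤ 2 * ρ := by linarith
      have : Kr * (|x.1| + |x.2 - 1|) ≤ Kr * (2 * ρ) :=
        mul_le_mul_of_nonneg_left hx2 hKr
      have h4 : Kr * (2 * ρ) ≤ Kr * (2 * (1/(4*(Kr+1)))) :=
        mul_le_mul_of_nonneg_left (by linarith) hKr
      have h5 : Kr * (2 * (1/(4*(Kr+1)))) ≤ 1/2 := by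
        rw [show Kr * (2 * (1/(4*(Kr+1)))) = (2*Kr)/(4*(Kr+1)) from by ring,
          div_le_iff₀ (by linarith : (0:ℝ) < 4*(Kr+1))]
        linarith
      linarith
    have hsm : ∀ j : Fin N, 1 ≤ j.val → |w.2 j| ≤ 1/2 := by
      intro j hj
      have := hKd j
      have he : e1v N j = 0 := by simp [e1v, Nat.pos_iff_ne_zero.1 hj]
      rw [he, sub_zero] at this
      linarith
    have h0 : ∀ j : Fin N, |w.2 j| ≤ 2 := by
      intro j
      have := hKd j
      have he : |e1v N j| ≤ 1 := by unfold e1v; split_ifs <;> norm_num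
      calc |w.2 j| = |(w.2 j - e1v N j) + e1v N j| := by ring_nf
        _ ≤ |w.2 j - e1v N j| + |e1v N j| := abs_add_le _ _
        _ ≤ 2 := by linarith
    refine ⟨?_, ?_, ?_⟩
    · -- the equation
      refine Prod.ext ?_ ?_
      · funext j
        show x.1 * lap (0 : Fin N → ℝ) j + x.2 * 0 - _ * 0 + _ - _ = _
        have hlap0 : lap (0 : Fin N → ℝ) j = 0 := by
          unfold lap; split_ifs <;> simp
        simp [hlap0]
      · funext j
        have := heqs j
        show -(x.1 * lap w.2 j) - x.2 * w.2 j + (w.2 j ^ 2 + (0:Fin N → ℝ) j ^ 2) * w.2 j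
            + (if j.val = 0 then 0 * (0:Fin N → ℝ) j else 0)
            - (if j.val = N - 1 then 0 * (0:Fin N → ℝ) j else 0) = 0
        simp only [Pi.zero_apply, zero_mul, ite_self, add_zero, sub_zero]
        nlinarith [heqs j]
    · -- first-component estimate
      have := hKd ⟨0, by omega⟩
      have he : e1v N ⟨0, by omega⟩ = 1 := by simp [e1v]
      rw [he] at this
      have hC : Kr * (|x.1| + |x.2 - 1|) ≤ C * (|x.1| + |x.2 - 1|) := by
        apply mul_le_mul_of_nonneg_right _ (by positivity)
        have h16 : (0:ℝ) < 16 ^ N := by positivity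
        rw [hCdef]
        linarith
      show |w.2 ⟨0, by omega⟩ - 1| ≤ C * (|x.1| + |x.2 - 1|)
      linarith
    · -- decay estimate
      intro j hj
      show |w.2 j| ≤ C * |x.1| ^ (j : ℕ)
      have hde := decay_estimate hN w.2 x.1 x.2 heqs (by linarith [abs_lt.1 h2 |>.1, hρ32])
        (by linarith) h0 hsm j hj
      have hpow : (16 * |x.1|) ^ j.val = 16 ^ j.val * |x.1| ^ j.val := mul_pow _ _ _
      have h16 : (16:ℝ) ^ j.val ≤ 16 ^ N :=
        pow_le_pow_right₀ (by norm_num) (le_of_lt j.isLt)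
      calc |w.2 j| ≤ 2 * (16 * |x.1|) ^ j.val := hde
        _ = 2 * 16 ^ j.val * |x.1| ^ j.val := by rw [hpow]; ring
        _ ≤ C * |x.1| ^ j.val := by
            apply mul_le_mul_of_nonneg_right _ (by positivity)
            rw [hCdef]
            nlinarith [h16]
end

section
/- Let ε, ω, γ, β ∈ ℝ and suppose (p*, q*) ∈ ℝ^N × ℝ^N satisfies G(p*, q*; ε, ω, γ, β) = 0. Then the Fréchet derivative of G at (p*, q*) annihilates the vector v⁽¹⁾ = (−q*, p*): DG(p*, q*)(−q*, p*) = 0. In other words, 0 is an eigenvalue of the linearization about any damped and driven breather, with eigenvector (−q*, p*). -/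
/-! Writing `p + i q`, every term of `G` (the linear coupling, the cubic term, which depends on
the site only through `p_j² + q_j²`, and the boundary gain and loss) commutes with the phase
rotations `u ↦ e^{iθ} u`. The rotation orbit of a breather therefore consists of breathers, and
differentiating `G (rot θ u) = 0` at `θ = 0` shows that `DG(u)` kills the orbit's tangent vector
`(-q, p)`. -/

section Laplacian

variable {N : ℕ} (x y : Fin N → ℝ) (j : Fin N)

lemma lap_add : lap (x + y) j = lap x j + lap y j := by
  unfold lap
  split_ifs <;> simp only [Pi.add_apply] <;> ring

lemma lap_sub : lap (x - y) j = lap x j - lap y j := by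
  unfold lap
  split_ifs <;> simp only [Pi.sub_apply] <;> ring

lemma lap_smul (a : ℝ) : lap (a • x) j = a * lap x j := by
  unfold lap
  split_ifs <;> simp only [Pi.smul_apply, smul_eq_mul] <;> ring

end Laplacian

section Rotation

variable {E : Type*}

/-- The phase rotation `p + i q ↦ e^{iθ} (p + i q)`. -/
noncomputable def rot [AddCommGroup E] [Module ℝ E] (θ : ℝ) (u : E × E) : E × E :=
  (Real.cos θ • u.1 - Real.sin θ • u.2, Real.sin θ • u.1 + Real.cos θ • u.2)

lemma rot_zero_angle [AddCommGroup E] [Module ℝ E] (u : E × E) : rot 0 u = u := by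
  simp [rot]

lemma rot_zero [AddCommGroup E] [Module ℝ E] (θ : ℝ) : rot θ (0 : E × E) = 0 := by
  simp [rot]

lemma hasDerivAt_rot [NormedAddCommGroup E] [NormedSpace ℝ E] (u : E × E) (θ : ℝ) :
    HasDerivAt (fun θ => rot θ u) (rot θ (-u.2, u.1)) θ := by
  have hp := ((Real.hasDerivAt_cos θ).smul_const u.1).sub ((Real.hasDerivAt_sin θ).smul_const u.2)
  have hq := ((Real.hasDerivAt_sin θ).smul_const u.1).add ((Real.hasDerivAt_cos θ).smul_const u.2)
  refine (hp.prodMk hq).congr_deriv ?_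
  simp only [rot, neg_smul, smul_neg, Prod.mk.injEq]
  constructor <;> abel

end Rotation

lemma G_rot (N : ℕ) (ε ω γ β θ : ℝ) (u : (Fin N → ℝ) × (Fin N → ℝ)) :
    G N ε ω γ β (rot θ u) = rot θ (G N ε ω γ β u) := by
  have hintensity (p q : ℝ) :
      (Real.cos θ * p - Real.sin θ * q) ^ 2 + (Real.sin θ * p + Real.cos θ * q) ^ 2 =
        p ^ 2 + q ^ 2 := by
    linear_combination (p ^ 2 + q ^ 2) * Real.sin_sq_add_cos_sq θ
  ext j <;>
    simp only [G, rot, lap_add, lap_sub, lap_smul, Pi.add_apply, Pi.sub_apply, Pi.smul_apply,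
      smul_eq_mul, hintensity] <;>
    split_ifs <;> ring

lemma differentiable_G (N : ℕ) (ε ω γ β : ℝ) : Differentiable ℝ (G N ε ω γ β) := by
  unfold G lap
  apply Differentiable.prodMk <;>
  · rw [differentiable_pi]
    intro j
    split_ifs <;> fun_prop

theorem stmt_5_general (N : ℕ) (ε ω γ β : ℝ)
    (u : (Fin N → ℝ) × (Fin N → ℝ)) (hu : G N ε ω γ β u = 0) :
    fderiv ℝ (G N ε ω γ β) u (-u.2, u.1) = 0 := by
  have horbit : (fun θ => G N ε ω γ β (rot θ u)) = fun _ => 0 := by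
    funext θ
    rw [G_rot, hu, rot_zero]
  have hderiv := (differentiable_G N ε ω γ β u).hasFDerivAt.comp_hasDerivAt_of_eq 0
    (hasDerivAt_rot u 0) (rot_zero_angle u).symm
  rw [rot_zero_angle, Function.comp_def, horbit] at hderiv
  exact hderiv.unique (hasDerivAt_const 0 0)

/-- The linearization of `G` about any damped and driven breather `(p*, q*)`
annihilates the vector `v⁽¹⁾ = (−q*, p*)`: zero is an eigenvalue with this
eigenvector. -/
theorem stmt_5 (N : ℕ) (hN : 2 ≤ N) (ε ω γ β : ℝ)
    (u : (Fin N → ℝ) × (Fin N → ℝ)) (hu : G N ε ω γ β u = 0) :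
    fderiv ℝ (G N ε ω γ β) u (-u.2, u.1) = 0 :=
  stmt_5_general N ε ω γ β u hu
end

section
/- Let γ > 0, β > 0 and ε ∈ ℝ with γβ < ε², and set s = √(ε² − γβ), E₁* = ½√(γ/β)·s, E₂* = ½√(β/γ)·s. If ε < 0, set ψ* = −arcsin(√(γβ)/ε); if ε > 0, set ψ* = −π + arcsin(√(γβ)/ε). Then (E₁*, E₂*, ψ*) is a fixed point of the two-site energy-phase system: 2ε√(E₁*E₂*) sin ψ* + 2βE₁* = 0, −2ε√(E₁*E₂*) sin ψ* − 2γE₂* = 0, and 2(E₂* − E₁*)(1 + ε cos ψ*/(2√(E₁*E₂*))) = 0. -/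
/-!
At the fixed point `√(E₁E₂) = s/2`, since `√(γ/β) · √(β/γ) = 1`. The phase is chosen so that
`ε sin ψ = -√(γβ)` and `ε cos ψ = -s` (the branch at `-π` flips the sign of the cosine when
`ε > 0`). The first two equations then reduce to `β √(γ/β) = √(γβ) = γ √(β/γ)`, and in the third
the second factor is `1 - s/s = 0`.
-/

open Real

namespace TwoSiteBreather

lemma abs_mul_sqrt_one_sub_div_sq {ε : ℝ} (hε : ε ≠ 0) (p : ℝ) :
    |ε| * √(1 - (p / ε) ^ 2) = √(ε ^ 2 - p ^ 2) := by
  rw [← sqrt_sq_eq_abs, ← sqrt_mul (sq_nonneg ε)]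
  congr 1
  field_simp

lemma mul_sqrt_div_self {β : ℝ} (hβ : 0 < β) (γ : ℝ) : β * √(γ / β) = √(γ * β) := by
  rw [← sqrt_sq hβ.le, ← sqrt_mul (sq_nonneg β), sqrt_sq hβ.le]
  congr 1
  field_simp

lemma sqrt_div_mul_sqrt_div {γ β : ℝ} (hγ : 0 < γ) (hβ : 0 < β) :
    √(γ / β) * √(β / γ) = 1 := by
  rw [← sqrt_mul (div_nonneg hγ.le hβ.le), div_mul_div_cancel₀ hβ.ne', div_self hγ.ne',
    sqrt_one]

variable {ε p ψ : ℝ}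

lemma abs_div_le_one_of_sq_le (hp : p ^ 2 ≤ ε ^ 2) (hε : ε ≠ 0) : |p / ε| ≤ 1 := by
  rw [abs_div, div_le_one (abs_pos.2 hε)]
  exact sq_le_sq.1 hp

lemma mul_sin_phase_eq (hp : p ^ 2 ≤ ε ^ 2)
    (hψneg : ε < 0 → ψ = -arcsin (p / ε)) (hψpos : 0 < ε → ψ = -π + arcsin (p / ε)) :
    ε * sin ψ = -p := by
  rcases lt_trichotomy ε 0 with hneg | rfl | hpos
  · obtain ⟨hx₁, hx₂⟩ := abs_le.1 (abs_div_le_one_of_sq_le hp hneg.ne)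
    rw [hψneg hneg, sin_neg, sin_arcsin hx₁ hx₂, mul_neg, mul_div_cancel₀ _ hneg.ne]
  · obtain rfl : p = 0 := by simpa using hp
    simp
  · obtain ⟨hx₁, hx₂⟩ := abs_le.1 (abs_div_le_one_of_sq_le hp hpos.ne')
    rw [hψpos hpos, neg_add_eq_sub, sin_sub_pi, sin_arcsin hx₁ hx₂, mul_neg,
      mul_div_cancel₀ _ hpos.ne']

lemma mul_cos_phase_eq (hp : p ^ 2 ≤ ε ^ 2)
    (hψneg : ε < 0 → ψ = -arcsin (p / ε)) (hψpos : 0 < ε → ψ = -π + arcsin (p / ε)) :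
    ε * cos ψ = -√(ε ^ 2 - p ^ 2) := by
  rcases lt_trichotomy ε 0 with hneg | rfl | hpos
  · rw [hψneg hneg, cos_neg, cos_arcsin, ← abs_mul_sqrt_one_sub_div_sq hneg.ne, abs_of_neg hneg]
    ring
  · obtain rfl : p = 0 := by simpa using hp
    simp
  · rw [hψpos hpos, neg_add_eq_sub, cos_sub_pi, cos_arcsin,
      ← abs_mul_sqrt_one_sub_div_sq hpos.ne', abs_of_pos hpos]
    ring

end TwoSiteBreather

open TwoSiteBreather in
/-- The two-site damped and driven breather is a fixed point of the two-site
energy-phase system. -/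
theorem stmt_12 (ε γ β : ℝ) (hγ : 0 < γ) (hβ : 0 < β) (h : γ * β < ε ^ 2)
    (E1 E2 ψ : ℝ)
    (hE1 : E1 = (1 / 2) * Real.sqrt (γ / β) * Real.sqrt (ε ^ 2 - γ * β))
    (hE2 : E2 = (1 / 2) * Real.sqrt (β / γ) * Real.sqrt (ε ^ 2 - γ * β))
    (hψneg : ε < 0 → ψ = -Real.arcsin (Real.sqrt (γ * β) / ε))
    (hψpos : 0 < ε → ψ = -Real.pi + Real.arcsin (Real.sqrt (γ * β) / ε)) :
    2 * ε * Real.sqrt (E1 * E2) * Real.sin ψ + 2 * β * E1 = 0 ∧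
    -(2 * ε * Real.sqrt (E1 * E2) * Real.sin ψ) - 2 * γ * E2 = 0 ∧
    2 * (E2 - E1) * (1 + ε * Real.cos ψ / (2 * Real.sqrt (E1 * E2))) = 0 := by
  set s := √(ε ^ 2 - γ * β)
  have hs : 0 < s := sqrt_pos.2 (sub_pos.2 h)
  have hsqrtE : √(E1 * E2) = s / 2 := by
    rw [hE1, hE2, show 1 / 2 * √(γ / β) * s * (1 / 2 * √(β / γ) * s)
        = (√(γ / β) * √(β / γ)) * (s / 2) ^ 2 by ring,
      sqrt_div_mul_sqrt_div hγ hβ, one_mul, sqrt_sq (by positivity)]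
  have hp : √(γ * β) ^ 2 ≤ ε ^ 2 := by rw [sq_sqrt (mul_pos hγ hβ).le]; exact h.le
  have hsin := mul_sin_phase_eq hp hψneg hψpos
  have hcos := mul_cos_phase_eq hp hψneg hψpos
  rw [sq_sqrt (mul_pos hγ hβ).le] at hcos
  change ε * cos ψ = -s at hcos
  refine ⟨?_, ?_, ?_⟩
  · rw [hsqrtE, hE1, show 2 * ε * (s / 2) * sin ψ + 2 * β * (1 / 2 * √(γ / β) * s)
        = s * (ε * sin ψ + β * √(γ / β)) by ring, hsin, mul_sqrt_div_self hβ]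
    ring
  · rw [hsqrtE, hE2, show -(2 * ε * (s / 2) * sin ψ) - 2 * γ * (1 / 2 * √(β / γ) * s)
        = -s * (ε * sin ψ + γ * √(β / γ)) by ring, hsin, mul_sqrt_div_self hγ, mul_comm β]
    ring
  · rw [hsqrtE, hcos, mul_div_cancel₀ _ two_ne_zero, neg_div, div_self hs.ne']
    ring
end

section
/- Let ε ≠ 0, γ > 0, E₀ > |ε|, and τ > 0. Suppose E : [0, τ] → ℝ is continuous, E(0) = E₀, E(τ) = |ε|, E(t) > |ε| for all t ∈ [0, τ), and E is differentiable on (0, τ) with E′(t) = −γ(E(t) − √(E(t)² − ε²)) for all t ∈ (0, τ). Then τ = (1/(2γ)) · [E₀(E₀ + √(E₀² − ε²))/ε² − ln((E₀ + √(E₀² − ε²))/|ε|) − 1]. -/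
/-!
`Φ(y) = y² + y√(y² − ε²) − ε² ln(y + √(y² − ε²))` is an antiderivative of `2(y + √(y² − ε²))`.
Along the flow `E′ = −γ(E − √(E² − ε²))` the product `(E + √(E² − ε²))(E − √(E² − ε²)) = ε²`
makes `Φ ∘ E` decrease at the constant rate `2γε²`, so the mean value theorem gives
`2γε² τ = Φ(E₀) − Φ(|ε|)`, which is the stated closed form.
-/

open Real Set

noncomputable def energyPotential (ε y : ℝ) : ℝ :=
  y ^ 2 + y * √(y ^ 2 - ε ^ 2) - ε ^ 2 * log (y + √(y ^ 2 - ε ^ 2))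

section energyPotential

variable {ε : ℝ}

theorem hasDerivAt_energyPotential {x : ℝ} (hx : |ε| < x) :
    HasDerivAt (energyPotential ε) (2 * (x + √(x ^ 2 - ε ^ 2))) x := by
  have hd : 0 < x ^ 2 - ε ^ 2 := by nlinarith [abs_nonneg ε, sq_abs ε]
  have hs : 0 < √(x ^ 2 - ε ^ 2) := sqrt_pos.mpr hd
  have hsq : √(x ^ 2 - ε ^ 2) ^ 2 = x ^ 2 - ε ^ 2 := sq_sqrt hd.le
  have hsqrt : HasDerivAt (fun y => √(y ^ 2 - ε ^ 2)) (2 * x / (2 * √(x ^ 2 - ε ^ 2))) x := by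
    simpa using ((hasDerivAt_pow 2 x).sub_const (ε ^ 2)).sqrt hd.ne'
  have hpos : x + √(x ^ 2 - ε ^ 2) ≠ 0 := by linarith [abs_nonneg ε]
  refine (((hasDerivAt_pow 2 x).add ((hasDerivAt_id x).mul hsqrt)).sub
    ((((hasDerivAt_id x).add hsqrt).log hpos).const_mul (ε ^ 2))).congr_deriv ?_
  simp only [Pi.add_apply, id_eq, Nat.cast_ofNat]
  field_simp
  linear_combination (-(x + √(x ^ 2 - ε ^ 2))) * hsq

theorem continuousOn_energyPotential (hε : ε ≠ 0) : ContinuousOn (energyPotential ε) (Ici |ε|) := by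
  have hsqrt : Continuous fun y : ℝ => √(y ^ 2 - ε ^ 2) := by fun_prop
  refine (continuous_pow 2 |>.add (continuous_id.mul hsqrt)).continuousOn.sub
    (continuousOn_const.mul ((continuous_id.add hsqrt).continuousOn.log fun y hy => ?_))
  exact (add_pos_of_pos_of_nonneg ((abs_pos.mpr hε).trans_le hy) (sqrt_nonneg _)).ne'

theorem HasDerivAt.energyPotential_comp {γ t : ℝ} {E : ℝ → ℝ} (ht : |ε| < E t)
    (hE : HasDerivAt E (-(γ * (E t - √(E t ^ 2 - ε ^ 2)))) t) :
    HasDerivAt (energyPotential ε ∘ E) (-(2 * γ * ε ^ 2)) t := by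
  refine ((hasDerivAt_energyPotential ht).comp t hE).congr_deriv ?_
  have hsq : √(E t ^ 2 - ε ^ 2) ^ 2 = E t ^ 2 - ε ^ 2 :=
    sq_sqrt (by nlinarith [abs_nonneg ε, sq_abs ε])
  linear_combination (2 * γ) * hsq

theorem energyPotential_sub_energyPotential_abs (hε : ε ≠ 0) {y : ℝ} (hy : |ε| < y) :
    energyPotential ε y - energyPotential ε |ε| =
      y * (y + √(y ^ 2 - ε ^ 2)) - ε ^ 2 * log ((y + √(y ^ 2 - ε ^ 2)) / |ε|) - ε ^ 2 := by
  have hε' : 0 < |ε| := abs_pos.mpr hε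
  have hpos : 0 < y + √(y ^ 2 - ε ^ 2) := add_pos_of_pos_of_nonneg (hε'.trans hy) (sqrt_nonneg _)
  rw [energyPotential, energyPotential, sq_abs, sub_self, sqrt_zero, add_zero, log_div hpos.ne'
    hε'.ne', ← sq_abs ε]
  ring

end energyPotential

theorem stmt_19_general (ε γ E₀ τ : ℝ) (hε : ε ≠ 0) (hγ : 0 < γ)
    (hτ : 0 < τ) (E : ℝ → ℝ)
    (hcont : ContinuousOn E (Set.Icc 0 τ))
    (h0 : E 0 = E₀) (hτE : E τ = |ε|)
    (hgt : ∀ t ∈ Set.Ico 0 τ, |ε| < E t)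
    (hode : ∀ t ∈ Set.Ioo 0 τ,
      HasDerivAt E (-(γ * (E t - Real.sqrt ((E t) ^ 2 - ε ^ 2)))) t) :
    τ = (1 / (2 * γ)) *
      (E₀ * (E₀ + Real.sqrt (E₀ ^ 2 - ε ^ 2)) / ε ^ 2
        - Real.log ((E₀ + Real.sqrt (E₀ ^ 2 - ε ^ 2)) / |ε|) - 1) := by
  have hE₀ : |ε| < E₀ := h0 ▸ hgt 0 ⟨le_rfl, hτ⟩
  have hmaps : MapsTo E (Icc 0 τ) (Ici |ε|) := fun t ht =>
    ht.2.eq_or_lt.elim (fun h => (h ▸ hτE).ge) fun h => (hgt t ⟨ht.1, h⟩).le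
  obtain ⟨-, -, hslope⟩ := exists_hasDerivAt_eq_slope _ _ hτ
    ((continuousOn_energyPotential hε).comp hcont hmaps)
    fun t ht => HasDerivAt.energyPotential_comp (hgt t ⟨ht.1.le, ht.2⟩) (hode t ht)
  have hdrop := energyPotential_sub_energyPotential_abs hε hE₀
  rw [Function.comp_apply, Function.comp_apply, hτE, h0, sub_zero, eq_div_iff hτ.ne'] at hslope
  have hε2 : ε ^ 2 ≠ 0 := pow_ne_zero 2 hε
  field_simp
  linear_combination hdrop - hslope

/-- The time `τ` at which the total energy reaches the bifurcation value `|ε|`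
is `τ = (1/2γ)[E₀(E₀ + √(E₀² − ε²))/ε² − ln((E₀ + √(E₀² − ε²))/|ε|) − 1]`. -/
theorem stmt_19 (ε γ E₀ τ : ℝ) (hε : ε ≠ 0) (hγ : 0 < γ) (hE₀ : |ε| < E₀)
    (hτ : 0 < τ) (E : ℝ → ℝ)
    (hcont : ContinuousOn E (Set.Icc 0 τ))
    (h0 : E 0 = E₀) (hτE : E τ = |ε|)
    (hgt : ∀ t ∈ Set.Ico 0 τ, |ε| < E t)
    (hode : ∀ t ∈ Set.Ioo 0 τ,
      HasDerivAt E (-(γ * (E t - Real.sqrt ((E t) ^ 2 - ε ^ 2)))) t) :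
    τ = (1 / (2 * γ)) *
      (E₀ * (E₀ + Real.sqrt (E₀ ^ 2 - ε ^ 2)) / ε ^ 2
        - Real.log ((E₀ + Real.sqrt (E₀ ^ 2 - ε ^ 2)) / |ε|) - 1) :=
  stmt_19_general ε γ E₀ τ hε hγ hτ E hcont h0 hτE hgt hode
end
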